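/- arXiv:2211.04091 — 4 statements merged into one kernel-verified Lean document; each statement's English description precedes it below -/
import Mathlib

section
/- Let H be a complex Hilbert space with two equivalent inner products ⟨·,·⟩ and ⟨·,·⟩' satisfying e^{−c}‖v‖² ≤ ‖v‖'² ≤ e^{c}‖v‖² for all v, for some constant c > 0. Let X be a closed subspace and T a nonzero bounded linear functional on X. Let S be the unit vector (w.r.t. ‖·‖) in X with T(S) = ‖T|_X‖, and S' the unit vector (w.r.t. ‖·‖') in X with T(S') = ‖T|_X‖'. Then e^{−c/2} T(S') ≤ T(S) ≤ e^{c/2} T(S') and ‖S − S'‖² ≤ e^{c} − e^{−c}. -/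
/-!
Both peak sections represent `T` on `X`: orthogonality to the kernel gives `T v = T S * ⟪S, v⟫`,
and the first-order condition at the maximum `S'` gives `Re T v = T S' * Re B(v, S')`. Hence
`r := Re ⟪S, S'⟫ = T S' / T S` and `r * Re B(S, S') = 1`. The two-sided bound on `T S / T S'` is
then Cauchy–Schwarz (`r ≤ ‖S'‖ ≤ e^(c/2)`) and the peak bound `T S ≤ √B(S, S) * T S'`.
For the distance, write `⟪v, w⟫ = B(P w, v)` with `e^(-c) ≤ P ≤ e^c`, so that `r • S' = P S`;
then `(P - e^(-c)) (P - e^c) ≤ 0` gives `‖S'‖² ≤ e^c + e^(-c) - r⁻²`, and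
`‖S - S'‖² = 1 - 2r + ‖S'‖² ≤ e^c + e^(-c) - 2 ≤ e^c - e^(-c)` because `2r + r⁻² ≥ 3`.
-/

theorem eq_zero_of_forall_mul_le_sq_mul {k M : ℝ} (hM : 0 ≤ M)
    (h : ∀ ε : ℝ, ε * k ≤ ε ^ 2 * M) : k = 0 := by
  have := h (k / (M + 1))
  rw [div_pow, div_mul_eq_mul_div, div_mul_eq_mul_div,
    div_le_div_iff₀ (by positivity) (by positivity)] at this
  nlinarith [sq_nonneg k, mul_nonneg (sq_nonneg k) hM]

/-- Linear in the first argument and conjugate-linear in the second, unlike `inner`. -/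
structure IsHermitianForm {H : Type*} [AddCommGroup H] [Module ℂ H] (B : H → H → ℂ) : Prop where
  add_left : ∀ x y z, B (x + y) z = B x z + B y z
  smul_left : ∀ (a : ℂ) x y, B (a • x) y = a * B x y
  conj_symm : ∀ x y, B y x = starRingEnd ℂ (B x y)

namespace IsHermitianForm

variable {H : Type*} [AddCommGroup H] [Module ℂ H] {B : H → H → ℂ}

theorem add_right (hB : IsHermitianForm B) (x y z : H) : B z (x + y) = B z x + B z y := by
  rw [hB.conj_symm, hB.add_left, map_add, ← hB.conj_symm, ← hB.conj_symm]

theorem smul_right (hB : IsHermitianForm B) (a : ℂ) (x y : H) :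
    B x (a • y) = starRingEnd ℂ a * B x y := by
  rw [hB.conj_symm, hB.smul_left, map_mul, ← hB.conj_symm]

theorem re_symm (hB : IsHermitianForm B) (x y : H) : (B y x).re = (B x y).re := by
  rw [hB.conj_symm, Complex.conj_re]

theorem re_smul_add_smul_self (hB : IsHermitianForm B) (x y : ℝ) (u w : H) :
    (B ((x : ℂ) • u + (y : ℂ) • w) ((x : ℂ) • u + (y : ℂ) • w)).re =
      x ^ 2 * (B u u).re + 2 * x * y * (B u w).re + y ^ 2 * (B w w).re := by
  simp only [hB.add_left, hB.add_right, hB.smul_left, hB.smul_right, Complex.conj_ofReal,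
    Complex.add_re, Complex.re_ofReal_mul, hB.re_symm w u]
  ring

theorem re_smul_self (hB : IsHermitianForm B) (x : ℝ) (u : H) :
    (B ((x : ℂ) • u) ((x : ℂ) • u)).re = x ^ 2 * (B u u).re := by
  simpa using hB.re_smul_add_smul_self x 0 u 0

theorem zero_zero (hB : IsHermitianForm B) : B 0 0 = 0 := by
  simpa using hB.smul_left 0 0 0

theorem re_self_nonneg (hB : IsHermitianForm B) (hpos : ∀ v, v ≠ 0 → 0 < (B v v).re) (v : H) :
    0 ≤ (B v v).re := by
  rcases eq_or_ne v 0 with rfl | hv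
  · simp [hB.zero_zero]
  · exact (hpos v hv).le

variable {F : Type*} [FunLike F H ℂ] [LinearMapClass F ℂ H ℂ] {X : Submodule ℂ H} {T : F} {S' : H}

theorem re_apply_le_sqrt_mul (hB : IsHermitianForm B) (hpos : ∀ v, v ≠ 0 → 0 < (B v v).re)
    (hmax : ∀ v ∈ X, (B v v).re = 1 → (T v).re ≤ (T S').re) {v : H} (hv : v ∈ X) :
    (T v).re ≤ √(B v v).re * (T S').re := by
  rcases eq_or_ne v 0 with rfl | hv0
  · simp [hB.zero_zero]
  set ρ := √(B v v).re
  have hρ : 0 < ρ := Real.sqrt_pos.mpr (hpos v hv0)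
  have hunit : (B (((ρ⁻¹ : ℝ) : ℂ) • v) (((ρ⁻¹ : ℝ) : ℂ) • v)).re = 1 := by
    rw [hB.re_smul_self, inv_pow, Real.sq_sqrt (hpos v hv0).le, inv_mul_cancel₀ (hpos v hv0).ne']
  have h := hmax _ (X.smul_mem _ hv) hunit
  rw [map_smul, smul_eq_mul, Complex.re_ofReal_mul] at h
  calc (T v).re = ρ * (ρ⁻¹ * (T v).re) := by field_simp
    _ ≤ ρ * (T S').re := by gcongr

theorem re_apply_eq_mul_re_of_maximizer (hB : IsHermitianForm B)
    (hpos : ∀ v, v ≠ 0 → 0 < (B v v).re)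
    (hmax : ∀ v ∈ X, (B v v).re = 1 → (T v).re ≤ (T S').re) (hS' : S' ∈ X)
    (hS'norm : (B S' S').re = 1) (hTS' : 0 ≤ (T S').re) {w : H} (hw : w ∈ X) :
    (T w).re = (T S').re * (B w S').re := by
  rw [hB.re_symm, ← sub_eq_zero]
  refine eq_zero_of_forall_mul_le_sq_mul (M := (T S').re * (B w w).re / 2)
    (by have := hB.re_self_nonneg hpos w; positivity) fun ε => ?_
  set v := ((1 : ℝ) : ℂ) • S' + (ε : ℂ) • w
  have hv : v ∈ X := X.add_mem (X.smul_mem _ hS') (X.smul_mem _ hw)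
  have hBv : (B v v).re = 1 + 2 * ε * (B S' w).re + ε ^ 2 * (B w w).re := by
    rw [hB.re_smul_add_smul_self, hS'norm]; ring
  have hTv : (T v).re = (T S').re + ε * (T w).re := by
    simp only [v, map_add, map_smul, smul_eq_mul, Complex.add_re, Complex.ofReal_one, one_mul,
      Complex.re_ofReal_mul]
  -- `√x ≤ (1 + x) / 2` makes the peak bound along `S' + ε w` quadratic in `ε`, tight at `ε = 0`.
  have hsqrt : √(B v v).re ≤ (1 + (B v v).re) / 2 := by
    nlinarith [Real.sq_sqrt (hB.re_self_nonneg hpos v), sq_nonneg (√(B v v).re - 1)]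
  have := (hB.re_apply_le_sqrt_mul hpos hmax hv).trans (mul_le_mul_of_nonneg_right hsqrt hTS')
  rw [hTv, hBv] at this
  linarith

end IsHermitianForm

section InnerProductSpace

variable {H : Type*} [NormedAddCommGroup H] [InnerProductSpace ℂ H]

theorem isHermitianForm_inner : IsHermitianForm (fun x y : H => inner ℂ y x) where
  add_left x y z := inner_add_right z x y
  smul_left a x y := inner_smul_right y x a
  conj_symm x y := (inner_conj_symm x y).symm

theorem norm_smul_add_smul_sq (x y : ℝ) (u w : H) :
    ‖(x : ℂ) • u + (y : ℂ) • w‖ ^ 2 =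
      x ^ 2 * ‖u‖ ^ 2 + 2 * x * y * (inner ℂ u w).re + y ^ 2 * ‖w‖ ^ 2 := by
  have := isHermitianForm_inner.re_smul_add_smul_self x y u w
  simp only [← RCLike.re_to_complex, inner_self_eq_norm_sq] at this
  rw [this, inner_re_symm, RCLike.re_to_complex]

theorem apply_eq_mul_inner_of_orthogonal {F : Type*} [FunLike F H ℂ] [LinearMapClass F ℂ H ℂ]
    {X : Submodule ℂ H} {T : F} {S : H} (hS : S ∈ X) (hSnorm : ‖S‖ = 1) (hTS : T S ≠ 0)
    (hSorth : ∀ v ∈ X, T v = 0 → inner ℂ S v = 0) {v : H} (hv : v ∈ X) :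
    T v = T S * inner ℂ S v := by
  have h := hSorth (v - (T v / T S) • S) (X.sub_mem hv (X.smul_mem _ hS))
    (by rw [map_sub, map_smul, smul_eq_mul, div_mul_cancel₀ _ hTS, sub_self])
  rw [inner_sub_right, inner_smul_right, inner_self_eq_one_of_norm_eq_one hSnorm, mul_one,
    sub_eq_zero] at h
  rw [h, mul_div_cancel₀ _ hTS]

theorem IsHermitianForm.re_inner_sq_mul_norm_sq_le {B : H → H → ℂ}
    (hB : IsHermitianForm B) {E : ℝ} (hE : 1 < E)
    (hlow : ∀ v, E⁻¹ * ‖v‖ ^ 2 ≤ (B v v).re) (hup : ∀ v, (B v v).re ≤ E * ‖v‖ ^ 2)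
    {u w : H} (hu : ‖u‖ = 1) (hw : (B w w).re = 1) (huw : (inner ℂ u w).re * (B u w).re = 1) :
    (inner ℂ u w).re ^ 2 * ‖w‖ ^ 2 ≤ (E + E⁻¹) * (inner ℂ u w).re ^ 2 - 1 := by
  -- With `P` as in the header, `r • w = P u`: test the bounds on `(P - E⁻¹) u` and `(P - E) u`.
  generalize hr : (inner ℂ u w).re = r at huw ⊢
  have ht (x : ℝ) : 2 * x * r * (B u w).re = 2 * x := by rw [mul_assoc _ r, huw, mul_one]
  have hL := hlow (((-E⁻¹ : ℝ) : ℂ) • u + (r : ℂ) • w)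
  have hU := hup (((-E : ℝ) : ℂ) • u + (r : ℂ) • w)
  rw [hB.re_smul_add_smul_self, norm_smul_add_smul_sq, hu, hw, hr, ht] at hL hU
  have hE0 : 0 < E := by linarith
  have hE3 : 0 < E * (E ^ 2 - 1) := mul_pos hE0 (by nlinarith)
  field_simp at hL ⊢
  rw [← mul_le_mul_iff_of_pos_left hE3]
  nlinarith [hL, hU]

theorem IsHermitianForm.norm_sub_sq_le {B : H → H → ℂ}
    (hB : IsHermitianForm B) {E : ℝ} (hE : 1 < E)
    (hlow : ∀ v, E⁻¹ * ‖v‖ ^ 2 ≤ (B v v).re) (hup : ∀ v, (B v v).re ≤ E * ‖v‖ ^ 2)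
    {u w : H} (hu : ‖u‖ = 1) (hw : (B w w).re = 1) (hr : 0 < (inner ℂ u w).re)
    (huw : (inner ℂ u w).re * (B u w).re = 1) :
    ‖u - w‖ ^ 2 ≤ E - E⁻¹ := by
  have h := hB.re_inner_sq_mul_norm_sq_le hE hlow hup hu hw huw
  rw [@norm_sub_sq ℂ, hu, RCLike.re_to_complex]
  generalize (inner ℂ u w).re = r at h hr ⊢
  have hE' : E⁻¹ ≤ 1 := inv_le_one_of_one_le₀ hE.le
  refine le_of_mul_le_mul_left ?_ (pow_pos hr 2)
  nlinarith [mul_nonneg (sq_nonneg (r - 1)) (by linarith : (0:ℝ) ≤ 2 * r + 1),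
    mul_le_mul_of_nonneg_left hE' (sq_nonneg r)]

end InnerProductSpace

theorem stmt_2_general {H : Type*} [NormedAddCommGroup H] [InnerProductSpace ℂ H]
    (X : Submodule ℂ H)
    (B : H → H → ℂ)
    (hB_add : ∀ x y z : H, B (x + y) z = B x z + B y z)
    (hB_smul : ∀ (a : ℂ) (x y : H), B (a • x) y = a * B x y)
    (hB_conj : ∀ x y : H, B y x = (starRingEnd ℂ) (B x y))
    (c : ℝ) (hc : 0 < c)
    (hlow : ∀ v : H, Real.exp (-c) * ‖v‖ ^ 2 ≤ (B v v).re)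
    (hup : ∀ v : H, (B v v).re ≤ Real.exp c * ‖v‖ ^ 2)
    (T : H →L[ℂ] ℂ) (S S' : H) (hS : S ∈ X) (hS' : S' ∈ X)
    (hSnorm : ‖S‖ = 1) (hS'norm : (B S' S').re = 1)
    (hSre : 0 < (T S).re) (hSim : (T S).im = 0)
    (hS're : 0 < (T S').re)
    (hS'max : ∀ v ∈ X, (B v v).re = 1 → (T v).re ≤ (T S').re)
    (hSorth : ∀ v ∈ X, T v = 0 → (inner ℂ S v : ℂ) = 0) :
    Real.exp (-(c / 2)) * (T S').re ≤ (T S).re ∧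
      (T S).re ≤ Real.exp (c / 2) * (T S').re ∧
      ‖S - S'‖ ^ 2 ≤ Real.exp c - Real.exp (-c) := by
  have hB : IsHermitianForm B := ⟨hB_add, hB_smul, hB_conj⟩
  have hhalf : Real.exp (c / 2) ^ 2 = Real.exp c := by rw [← Real.exp_nat_mul]; ring_nf
  simp only [Real.exp_neg] at hlow ⊢
  have hpos (v : H) (hv : v ≠ 0) : 0 < (B v v).re := (hlow v).trans_lt' (by positivity)
  have hTS' : (T S').re = (T S).re * (inner ℂ S S').re := by
    rw [apply_eq_mul_inner_of_orthogonal hS hSnorm (fun h => hSre.ne' (by simp [h])) hSorth hS',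
      Complex.mul_re, hSim, zero_mul, sub_zero]
  have hTS : (T S).re = (T S').re * (B S S').re :=
    hB.re_apply_eq_mul_re_of_maximizer hpos hS'max hS' hS'norm hS're.le hS
  have hS'le : ‖S'‖ ≤ Real.exp (c / 2) := by
    rw [← pow_le_pow_iff_left₀ (norm_nonneg _) (Real.exp_pos _).le two_ne_zero, hhalf]
    simpa [hS'norm, inv_mul_le_iff₀ (Real.exp_pos c)] using hlow S'
  refine ⟨?_, ?_, ?_⟩
  · rw [inv_mul_le_iff₀ (Real.exp_pos _), hTS']
    calc (T S).re * (inner ℂ S S').re ≤ (T S).re * ‖S'‖ := by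
          gcongr
          simpa [hSnorm] using re_inner_le_norm (𝕜 := ℂ) S S'
      _ ≤ _ := by rw [mul_comm]; gcongr
  · calc (T S).re ≤ √(B S S).re * (T S').re := hB.re_apply_le_sqrt_mul hpos hS'max hS
      _ ≤ Real.exp (c / 2) * (T S').re := by
          gcongr
          rw [Real.sqrt_le_left (Real.exp_pos _).le, hhalf]
          simpa [hSnorm] using hup S
  · refine hB.norm_sub_sq_le (Real.one_lt_exp_iff.mpr hc) hlow hup hSnorm hS'norm ?_ ?_
    · exact pos_of_mul_pos_right (hTS' ▸ hS're) hSre.le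
    · refine mul_left_cancel₀ hSre.ne' ?_
      rw [mul_one, ← mul_assoc, ← hTS', ← hTS]

/-- comparison of peak sections for two equivalent inner products.
`H` is a complex Hilbert space with inner product `⟪·,·⟫` (giving the norm `‖·‖`), and
`B` is a second inner product on `H` satisfying `e^(−c)‖v‖² ≤ (B v v).re ≤ e^c ‖v‖²`.
`X` is a closed subspace and `T` a bounded linear functional.  `S` is the peak section
of `T` on `X` for `⟪·,·⟫` (a unit vector on which `Re T` is maximal among unit vectors
of `X`, with `T S` real positive, and `S ⟂ ker T ∩ X`), and `S'` is the peak section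
of `T` on `X` for `B`.  Then `e^(−c/2) T(S') ≤ T(S) ≤ e^(c/2) T(S')` and
`‖S − S'‖² ≤ e^c − e^(−c)`. -/
theorem stmt_2 {H : Type*} [NormedAddCommGroup H] [InnerProductSpace ℂ H]
    [CompleteSpace H] (X : Submodule ℂ H) (hXc : IsClosed (X : Set H))
    (B : H → H → ℂ)
    (hB_add : ∀ x y z : H, B (x + y) z = B x z + B y z)
    (hB_smul : ∀ (a : ℂ) (x y : H), B (a • x) y = a * B x y)
    (hB_conj : ∀ x y : H, B y x = (starRingEnd ℂ) (B x y))
    (c : ℝ) (hc : 0 < c)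
    (hlow : ∀ v : H, Real.exp (-c) * ‖v‖ ^ 2 ≤ (B v v).re)
    (hup : ∀ v : H, (B v v).re ≤ Real.exp c * ‖v‖ ^ 2)
    (T : H →L[ℂ] ℂ) (S S' : H) (hS : S ∈ X) (hS' : S' ∈ X)
    (hSnorm : ‖S‖ = 1) (hS'norm : (B S' S').re = 1)
    (hSre : 0 < (T S).re) (hSim : (T S).im = 0)
    (hS're : 0 < (T S').re) (hS'im : (T S').im = 0)
    (hSmax : ∀ v ∈ X, ‖v‖ = 1 → (T v).re ≤ (T S).re)
    (hS'max : ∀ v ∈ X, (B v v).re = 1 → (T v).re ≤ (T S').re)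
    (hSorth : ∀ v ∈ X, T v = 0 → (inner ℂ S v : ℂ) = 0) :
    Real.exp (-(c / 2)) * (T S').re ≤ (T S).re ∧
      (T S).re ≤ Real.exp (c / 2) * (T S').re ∧
      ‖S - S'‖ ^ 2 ≤ Real.exp c - Real.exp (-c) :=
  stmt_2_general X B hB_add hB_smul hB_conj c hc hlow hup T S S' hS hS' hSnorm hS'norm hSre hSim
    hS're hS'max hSorth
end

section
/- Define f(t) = (1+t)e^{−t}. There exist constants m₀, depending only on N, such that for all integers m ≥ m₀ and all t with t ≤ −log(m)/√m (and t > −1), one has f(t)^m ≤ m^{−N}. -/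
/-!
On `(-1, 0]` the Taylor series `-log (1 - u) = ∑ uᵏ/k` has nonnegative terms, so
`log (1 + t) ≤ t - t²/2`, i.e. `(1 + t) e^{-t} ≤ e^{-t²/2}`. For `t ≤ -log m/√m` this gives
`f(t)^m ≤ e^{-m t²/2} ≤ e^{-(log m)²/2}`, which is at most `m^{-N}` as soon as `log m ≥ 2N`.
-/

open Real

lemma add_sq_div_two_le_neg_log_one_sub {u : ℝ} (hu₀ : 0 ≤ u) (hu₁ : u < 1) :
    u + u ^ 2 / 2 ≤ -log (1 - u) := by
  have hsum := hasSum_pow_div_log_of_abs_lt_one (x := u) (by rwa [abs_of_nonneg hu₀])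
  have := sum_le_hasSum (Finset.range 2) (fun n _ => by positivity) hsum
  norm_num [Finset.sum_range_succ] at this
  exact this

lemma one_add_mul_exp_neg_le_exp {t : ℝ} (ht₁ : -1 < t) (ht₀ : t ≤ 0) :
    (1 + t) * exp (-t) ≤ exp (-t ^ 2 / 2) := by
  have hlog : log (1 + t) ≤ t - t ^ 2 / 2 := by
    have := add_sq_div_two_le_neg_log_one_sub (u := -t) (by linarith) (by linarith)
    rw [sub_neg_eq_add, neg_sq] at this
    linarith
  calc (1 + t) * exp (-t) = exp (log (1 + t) - t) := by
        rw [exp_sub, exp_log (by linarith), div_eq_mul_inv, exp_neg]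
    _ ≤ exp (-t ^ 2 / 2) := exp_le_exp.mpr (by linarith)

lemma one_add_mul_exp_neg_pow_le_exp {t : ℝ} (ht₁ : -1 < t) (ht₀ : t ≤ 0) (m : ℕ) :
    ((1 + t) * exp (-t)) ^ m ≤ exp (-(m * t ^ 2) / 2) := by
  calc ((1 + t) * exp (-t)) ^ m ≤ exp (-t ^ 2 / 2) ^ m :=
        pow_le_pow_left₀ (by nlinarith [exp_pos (-t)]) (one_add_mul_exp_neg_le_exp ht₁ ht₀) m
    _ = exp (-(m * t ^ 2) / 2) := by rw [← exp_nat_mul]; ring_nf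

lemma sq_log_le_mul_sq_of_le_neg_log_div_sqrt {m t : ℝ} (hm : 0 < m) (hlog : 0 ≤ log m)
    (ht : t ≤ -log m / √m) : log m ^ 2 ≤ m * t ^ 2 := by
  have hs : 0 < √m := sqrt_pos.mpr hm
  have hts : log m ≤ -t * √m := by
    rwa [neg_div, le_neg, div_le_iff₀ hs] at ht
  calc log m ^ 2 ≤ (-t * √m) ^ 2 := pow_le_pow_left₀ hlog hts 2
    _ = m * t ^ 2 := by rw [mul_pow, sq_sqrt hm.le]; ring

/-- With `f(t) = (1+t)e^(−t)`, for every `N` there is `m₀ = m₀(N)`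
such that for all integers `m ≥ m₀` and all `t ∈ (−1, −log m/√m]`,
`f(t)^m ≤ m^(−N)`. -/
theorem stmt_7 (N : ℕ) :
    ∃ m₀ : ℕ, ∀ m : ℕ, m₀ ≤ m → ∀ t : ℝ, -1 < t →
      t ≤ -Real.log m / Real.sqrt m →
      ((1 + t) * Real.exp (-t)) ^ m ≤ 1 / (m : ℝ) ^ N := by
  refine ⟨⌈exp (2 * N)⌉₊, fun m hm t ht₁ ht => ?_⟩
  have hexp : exp (2 * N) ≤ m := Nat.ceil_le.mp hm
  have hm₀ : (0 : ℝ) < m := (exp_pos _).trans_le hexp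
  have hlog : 2 * N ≤ log m := (le_log_iff_exp_le hm₀).mpr hexp
  have ht₀ : t ≤ 0 := ht.trans (div_nonpos_of_nonpos_of_nonneg (by linarith) (sqrt_nonneg _))
  have hsq := sq_log_le_mul_sq_of_le_neg_log_div_sqrt hm₀ (by linarith) ht
  calc ((1 + t) * exp (-t)) ^ m ≤ exp (-(m * t ^ 2) / 2) :=
        one_add_mul_exp_neg_pow_le_exp ht₁ ht₀ m
    _ ≤ exp (-(N * log m)) := exp_le_exp.mpr (by nlinarith)
    _ = 1 / (m : ℝ) ^ N := by rw [exp_neg, ← log_pow, exp_log (by positivity), one_div]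
end

section
/- Let N ∈ ℕ and A = (a_{ij}) be an N×N Hermitian positive matrix such that max_{i,j} |a_{ij} − δ_{ij}| ≤ δ for some δ ≤ 1/(100N). Then every eigenvalue λ of A satisfies |λ − 1| ≤ 2Nδ, and there exists a Hermitian matrix B = (b_{ij}) with A = B·B* (B times its conjugate transpose) and max_{i,j} |b_{ij} − δ_{ij}| ≤ 2Nδ. -/
/-!
Gershgorin's circle theorem applied to `A - 1`, whose entries are bounded by `δ`, puts every
eigenvalue of `A` within `Nδ` of `1`. For `B = √A`, defined by the functional calculus,
`B - 1 = f(A)` with `f x = √x - 1`, and `|√x - 1| ≤ |x - 1|` on `[0, ∞)`. Hence the operator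
norm of `B - 1` is at most `Nδ`, and so is every entry of `B - 1`.
-/

open scoped ComplexOrder

theorem Real.abs_sqrt_sub_one_le {x : ℝ} (hx : 0 ≤ x) : |√x - 1| ≤ |x - 1| := by
  have hfactor : x - 1 = (√x - 1) * (√x + 1) := by nlinarith [Real.sq_sqrt hx]
  rw [hfactor, abs_mul]
  refine le_mul_of_one_le_right (abs_nonneg _) ?_
  rw [abs_of_nonneg (by positivity)]
  linarith [Real.sqrt_nonneg x]

namespace Matrix

variable {n : Type*} [Fintype n] [DecidableEq n]

theorem norm_le_card_mul_of_mem_spectrum {K : Type*} [NormedField K] {M : Matrix n n K} {δ : ℝ}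
    (hM : ∀ i j, ‖M i j‖ ≤ δ) {μ : K} (hμ : μ ∈ spectrum K M) :
    ‖μ‖ ≤ Fintype.card n * δ := by
  rw [← AlgEquiv.spectrum_eq toLinAlgEquiv', ← Module.End.hasEigenvalue_iff_mem_spectrum] at hμ
  obtain ⟨k, hk⟩ := eigenvalue_mem_ball hμ
  rw [mem_closedBall_iff_norm] at hk
  calc ‖μ‖ ≤ ‖M k k‖ + ‖μ - M k k‖ := by
        simpa using norm_add_le (M k k) (μ - M k k)
    _ ≤ ∑ j, ‖M k j‖ := by
        rw [← Finset.add_sum_erase _ _ (Finset.mem_univ k)]; gcongr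
    _ ≤ ∑ _j : n, δ := Finset.sum_le_sum fun j _ => hM k j
    _ = Fintype.card n * δ := by simp

theorem norm_sub_one_le_card_mul_of_mem_spectrum {K : Type*} [NormedField K] {M : Matrix n n K}
    {δ : ℝ} (hM : ∀ i j, ‖M i j - (1 : Matrix n n K) i j‖ ≤ δ) {μ : K} (hμ : μ ∈ spectrum K M) :
    ‖μ - 1‖ ≤ Fintype.card n * δ := by
  refine norm_le_card_mul_of_mem_spectrum (M := M - 1) hM ?_
  simpa [Algebra.algebraMap_eq_smul_one] using (spectrum.sub_singleton_eq M (1 : K)).subset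
    (Set.sub_mem_sub hμ rfl)

variable {𝕜 : Type*} [RCLike 𝕜]

open scoped Norms.L2Operator in
theorem norm_apply_le_l2_opNorm {m : Type*} [Fintype m] (M : Matrix m n 𝕜) (i : m) (j : n) :
    ‖M i j‖ ≤ ‖M‖ :=
  calc ‖M i j‖ = ‖(EuclideanSpace.equiv m 𝕜).symm (M *ᵥ EuclideanSpace.single j (1 : 𝕜)) i‖ := by
        simp [EuclideanSpace.single]
    _ ≤ ‖(EuclideanSpace.equiv m 𝕜).symm (M *ᵥ EuclideanSpace.single j (1 : 𝕜))‖ :=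
        PiLp.norm_apply_le _ i
    _ ≤ ‖M‖ * ‖EuclideanSpace.single j (1 : 𝕜)‖ := l2_opNorm_mulVec M _
    _ = ‖M‖ := by simp

open scoped Norms.L2Operator in
theorem IsHermitian.norm_cfc_apply_le {A : Matrix n n 𝕜} (hA : A.IsHermitian) {f : ℝ → ℝ} {c : ℝ}
    (hf : ∀ x ∈ spectrum ℝ A, |f x| ≤ c) (i j : n) : ‖cfc f A i j‖ ≤ c := by
  have hd : ∀ k, ‖((RCLike.ofReal : ℝ → 𝕜) ∘ f ∘ hA.eigenvalues) k‖ ≤ c := fun k => by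
    simpa using hf _ (hA.eigenvalues_mem_spectrum_real k)
  rw [hA.cfc_eq, IsHermitian.cfc, Unitary.conjStarAlgAut_apply]
  refine (norm_apply_le_l2_opNorm _ i j).trans ?_
  rw [← Unitary.coe_star, CStarRing.norm_mul_coe_unitary, CStarRing.norm_coe_unitary_mul,
    l2_opNorm_diagonal]
  exact (pi_norm_le_iff_of_nonneg ((norm_nonneg _).trans (hd i))).mpr hd

open scoped MatrixOrder in
theorem PosSemidef.nonneg_of_mem_spectrum {A : Matrix n n 𝕜} (hA : A.PosSemidef) {x : ℝ}
    (hx : x ∈ spectrum ℝ A) : 0 ≤ x :=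
  spectrum_nonneg_of_nonneg hA.nonneg hx

theorem PosSemidef.cfc_sqrt_mul_self {A : Matrix n n 𝕜} (hA : A.PosSemidef) :
    cfc Real.sqrt A * cfc Real.sqrt A = A := by
  rw [← cfc_mul Real.sqrt Real.sqrt A]
  conv_rhs => rw [← cfc_id' ℝ A hA.1]
  exact cfc_congr fun x hx => Real.mul_self_sqrt (hA.nonneg_of_mem_spectrum hx)

end Matrix

theorem stmt_8_general (N : ℕ) (A : Matrix (Fin N) (Fin N) ℂ) (hA : A.PosDef) (δ : ℝ)
    (hentry : ∀ i j, ‖A i j - (1 : Matrix (Fin N) (Fin N) ℂ) i j‖ ≤ δ) :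
    (∀ μ ∈ spectrum ℂ A, ‖μ - 1‖ ≤ 2 * N * δ) ∧
      ∃ B : Matrix (Fin N) (Fin N) ℂ, B.IsHermitian ∧ A = B * B.conjTranspose ∧
        ∀ i j, ‖B i j - (1 : Matrix (Fin N) (Fin N) ℂ) i j‖ ≤ 2 * N * δ := by
  have hspec : ∀ μ ∈ spectrum ℂ A, ‖μ - 1‖ ≤ N * δ := fun μ hμ => by
    simpa using Matrix.norm_sub_one_le_card_mul_of_mem_spectrum hentry hμ
  have hspec_real : ∀ x ∈ spectrum ℝ A, |x - 1| ≤ N * δ := fun x hx => by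
    simpa [← Complex.ofReal_one, ← Complex.ofReal_sub, Complex.norm_real] using
      hspec x ((spectrum.algebraMap_mem_iff ℂ).mpr hx)
  have hB : (cfc Real.sqrt A).IsHermitian := cfc_predicate Real.sqrt A
  refine ⟨fun μ hμ => ?_, cfc Real.sqrt A, hB, ?_, fun i j => ?_⟩
  · linarith [hspec μ hμ, norm_nonneg (μ - 1)]
  · rw [hB.eq, hA.posSemidef.cfc_sqrt_mul_self]
  · have hsub : cfc Real.sqrt A - 1 = cfc (fun x => √x - 1) A := by
      rw [cfc_sub Real.sqrt (fun _ => 1) A]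
      exact congrArg _ (cfc_const_one ℝ A hA.isHermitian).symm
    have hbound : ∀ x ∈ spectrum ℝ A, |√x - 1| ≤ 2 * N * δ := fun x hx => by
      linarith [Real.abs_sqrt_sub_one_le (hA.posSemidef.nonneg_of_mem_spectrum hx),
        hspec_real x hx, abs_nonneg (x - 1)]
    simpa [← hsub] using hA.isHermitian.norm_cfc_apply_le hbound i j

/-- Let `A` be an `N×N` Hermitian positive matrix with
`|a_{ij} − δ_{ij}| ≤ δ` for some `0 < δ ≤ 1/(100N)`.  Then every eigenvalue `λ` of
`A` satisfies `|λ − 1| ≤ 2Nδ`, and there is a Hermitian matrix `B` with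
`A = B B*` and `|b_{ij} − δ_{ij}| ≤ 2Nδ`. -/
theorem stmt_8 (N : ℕ) (A : Matrix (Fin N) (Fin N) ℂ) (hA : A.PosDef)
    (δ : ℝ) (hδ0 : 0 < δ) (hδ : δ ≤ 1 / (100 * N))
    (hentry : ∀ i j, ‖A i j - (1 : Matrix (Fin N) (Fin N) ℂ) i j‖ ≤ δ) :
    (∀ μ ∈ spectrum ℂ A, ‖μ - 1‖ ≤ 2 * N * δ) ∧
      ∃ B : Matrix (Fin N) (Fin N) ℂ, B.IsHermitian ∧ A = B * B.conjTranspose ∧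
        ∀ i j, ‖B i j - (1 : Matrix (Fin N) (Fin N) ℂ) i j‖ ≤ 2 * N * δ :=
  stmt_8_general N A hA δ hentry
end

section
/- For positive integers m ≥ n+1 and q ≤ e^{−4(K + |log|log κ|| + n + 4)} m (with K > 0 and 0 < κ < e^{−1} given constants), the quantity (n q^{m−n}/(2π(m−n−1)!)) · t^q · |log t|^m is bounded by C e^{−4Km − m|log|log t||} for all t ∈ (κ, 1), where C depends only on n and κ. -/
set_option maxHeartbeats 1000000

lemma pow_self_le_factorial_mul_exp : ∀ j : ℕ, (j:ℝ)^j ≤ (Nat.factorial j) * Real.exp j := by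
  intro j
  induction j with
  | zero => simp
  | succ j ih =>
    rcases Nat.eq_zero_or_pos j with rfl | hj
    · simp
    have hjR : (0:ℝ) < j := by exact_mod_cast hj
    have key : ((j:ℝ)+1)^j ≤ Real.exp 1 * (j:ℝ)^j := by
      have h0 := Real.add_one_le_exp (1/(j:ℝ))
      have h1 : (j:ℝ) + 1 ≤ (j:ℝ) * Real.exp (1/(j:ℝ)) := by
        have : (j:ℝ) + 1 = (j:ℝ) * (1/(j:ℝ) + 1) := by field_simp; ring
        rw [this]; nlinarith
      calc ((j:ℝ)+1)^j ≤ ((j:ℝ) * Real.exp (1/(j:ℝ)))^j := by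
            apply pow_le_pow_left₀ (by positivity) h1
        _ = (j:ℝ)^j * Real.exp (1/(j:ℝ))^j := by rw [mul_pow]
        _ = (j:ℝ)^j * Real.exp ((j:ℝ) * (1/(j:ℝ))) := by rw [Real.exp_nat_mul]
        _ = Real.exp 1 * (j:ℝ)^j := by rw [mul_one_div_cancel (ne_of_gt hjR)]; ring
    have hexp : Real.exp ((j:ℝ)+1) = Real.exp 1 * Real.exp j := by
      rw [← Real.exp_add]; ring_nf
    have hfac : (0:ℝ) ≤ (Nat.factorial j : ℝ) := by positivity
    push_cast [Nat.factorial_succ]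
    rw [hexp, pow_succ]
    calc ((j:ℝ)+1)^j * ((j:ℝ)+1) ≤ (Real.exp 1 * (j:ℝ)^j) * ((j:ℝ)+1) := by nlinarith
      _ ≤ (Real.exp 1 * ((Nat.factorial j : ℝ) * Real.exp j)) * ((j:ℝ)+1) := by
          have := Real.exp_pos (1:ℝ)
          nlinarith [mul_le_mul_of_nonneg_left ih (le_of_lt (Real.exp_pos (1:ℝ)))]
      _ = ((j:ℝ)+1) * (Nat.factorial j : ℝ) * (Real.exp 1 * Real.exp j) := by ring

lemma fact_lb (j : ℕ) (hj : 1 ≤ j) :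
    (j:ℝ)^(j-1) * Real.exp (-(j:ℝ)) ≤ (Nat.factorial (j-1) : ℝ) := by
  obtain ⟨k, rfl⟩ : ∃ k, j = k + 1 := ⟨j - 1, by omega⟩
  simp only [Nat.add_sub_cancel]
  have h := pow_self_le_factorial_mul_exp (k+1)
  have hk : (0:ℝ) < (k:ℝ)+1 := by positivity
  have h2 : ((k:ℝ)+1)^k ≤ (Nat.factorial k : ℝ) * Real.exp ((k:ℝ)+1) := by
    have hfs : (Nat.factorial (k+1) : ℝ) = ((k:ℝ)+1) * (Nat.factorial k : ℝ) := by
      push_cast [Nat.factorial_succ]; ring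
    push_cast at h
    rw [hfs, pow_succ] at h
    nlinarith [h, hk]
  have h3 := mul_le_mul_of_nonneg_right h2 (Real.exp_pos (-((k:ℝ)+1))).le
  push_cast
  calc ((k:ℝ)+1)^k * Real.exp (-((k:ℝ)+1))
      ≤ ((Nat.factorial k : ℝ) * Real.exp ((k:ℝ)+1)) * Real.exp (-((k:ℝ)+1)) := h3
    _ = (Nat.factorial k : ℝ) * (Real.exp ((k:ℝ)+1) * Real.exp (-((k:ℝ)+1))) := by ring
    _ = (Nat.factorial k : ℝ) := by rw [← Real.exp_add, add_neg_cancel, Real.exp_zero, mul_one]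

lemma log_pow_bound (Λ L : ℝ) (hΛ : 1 ≤ Λ) (hL : 0 < L) (hLΛ : L ≤ Λ) (m : ℕ) :
    L^m ≤ Λ^(2*m) * Real.exp (-(m:ℝ) * |Real.log L|) := by
  have hΛ0 : (0:ℝ) < Λ := lt_of_lt_of_le one_pos hΛ
  rcases le_or_gt L 1 with hc | hc
  · have habs : |Real.log L| = -Real.log L := abs_of_nonpos (Real.log_nonpos hL.le hc)
    have hE : Real.exp (-(m:ℝ) * |Real.log L|) = L^m := by
      rw [habs, show -(m:ℝ) * -Real.log L = (m:ℝ) * Real.log L by ring,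
        Real.exp_nat_mul, Real.exp_log hL]
    rw [hE]
    have h1 : (1:ℝ) ≤ Λ^(2*m) := one_le_pow₀ hΛ
    nlinarith [pow_nonneg hL.le m]
  · have habs : |Real.log L| = Real.log L := abs_of_pos (Real.log_pos hc)
    have hE : Real.exp (-(m:ℝ) * |Real.log L|) = (L^m)⁻¹ := by
      rw [habs, show -(m:ℝ) * Real.log L = -((m:ℝ) * Real.log L) by ring,
        Real.exp_neg, Real.exp_nat_mul, Real.exp_log hL]
    rw [hE, ← div_eq_mul_inv, le_div_iff₀ (pow_pos hL m), ← pow_add,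
      show m + m = 2*m by ring]
    exact pow_le_pow_left₀ hL.le hLΛ (2*m)

/-- For positive integers `m ≥ n + 1` and
`q ≤ e^(−4(K + |log|log κ|| + n + 4)) m` (with `K > 0` and `0 < κ < e⁻¹`),
`(n q^(m−n)/(2π (m−n−1)!)) t^q |log t|^m ≤ C e^(−4Km − m|log|log t||)`
for all `t ∈ (κ, 1)`, where `C` depends only on `n` and `κ`. -/
theorem stmt_15 (n : ℕ) (hn : 1 ≤ n) (κ : ℝ) (hκ0 : 0 < κ) (hκ1 : κ < Real.exp (-1)) :
    ∃ C > (0 : ℝ), ∀ K : ℝ, 0 < K → ∀ m q : ℕ, n + 1 ≤ m → 1 ≤ q →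
      (q : ℝ) ≤ Real.exp (-4 * (K + |Real.log (|Real.log κ|)| + n + 4)) * m →
      ∀ t : ℝ, κ < t → t < 1 →
        (n : ℝ) * (q : ℝ) ^ (m - n) / (2 * Real.pi * (Nat.factorial (m - n - 1))) *
            t ^ q * |Real.log t| ^ m ≤
          C * Real.exp (-4 * K * m - m * |Real.log (|Real.log t|)|) := by
  have hlogκ : Real.log κ < -1 := by
    have := Real.log_lt_log hκ0 hκ1
    rwa [Real.log_exp] at this
  have hΛ : 1 < |Real.log κ| := by
    rw [abs_of_neg (by linarith : Real.log κ < 0)]; linarith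
  have hΛpos : (0:ℝ) < |Real.log κ| := by linarith
  set A := Real.log (|Real.log κ|) with hAdef
  have hA : 0 < A := Real.log_pos hΛ
  have hnR1 : (1:ℝ) ≤ (n:ℝ) := by exact_mod_cast hn
  refine ⟨(n:ℝ) * ((n:ℝ)+1)^n * |Real.log κ|^(2*n), by positivity, ?_⟩
  intro K hK m q hm hq1 hqb t ht1 ht2
  rw [abs_of_pos hA] at hqb
  set j := m - n with hjdef
  have hj1 : 1 ≤ j := by omega
  have hmR : (m:ℝ) = (j:ℝ) + (n:ℝ) := by
    have : m = j + n := by omega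
    rw [this]; push_cast; ring
  have hjR1 : (1:ℝ) ≤ (j:ℝ) := by exact_mod_cast hj1
  have hjRnn : (0:ℝ) ≤ (j:ℝ) := by linarith
  have ht0 : 0 < t := lt_trans hκ0 ht1
  have hlogt : Real.log t < 0 := Real.log_neg ht0 ht2
  have hL0 : 0 < |Real.log t| := abs_pos.mpr (ne_of_lt hlogt)
  have hLΛ : |Real.log t| ≤ |Real.log κ| := by
    rw [abs_of_neg hlogt, abs_of_neg (by linarith : Real.log κ < 0)]
    have := Real.log_lt_log hκ0 ht1
    linarith
  -- basic exp facts
  have hqR1 : (1:ℝ) ≤ (q:ℝ) := by exact_mod_cast hq1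
  have hexpK : Real.exp (4*K) ≤ (m:ℝ) := by
    have h2 : Real.exp (4*K) * 1 ≤ Real.exp (4*K) * (Real.exp (-4 * (K + A + n + 4)) * m) :=
      mul_le_mul_of_nonneg_left (le_trans hqR1 hqb) (Real.exp_pos _).le
    have h3 : Real.exp (4*K) * (Real.exp (-4 * (K + A + n + 4)) * m)
        = Real.exp (-(4*A + 4*(n:ℝ) + 16)) * m := by
      rw [← mul_assoc, ← Real.exp_add]; congr 2; ring
    have h4 : Real.exp (-(4*A + 4*(n:ℝ) + 16)) ≤ 1 := by
      rw [Real.exp_le_one_iff]; nlinarith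
    have hm0 : (0:ℝ) ≤ (m:ℝ) := Nat.cast_nonneg m
    calc Real.exp (4*K) = Real.exp (4*K) * 1 := (mul_one _).symm
      _ ≤ Real.exp (4*K) * (Real.exp (-4 * (K + A + n + 4)) * m) := h2
      _ = Real.exp (-(4*A + 4*(n:ℝ) + 16)) * m := h3
      _ ≤ 1 * m := mul_le_mul_of_nonneg_right h4 hm0
      _ = m := one_mul _
  have hmnj : (m:ℝ) ≤ ((n:ℝ)+1) * (j:ℝ) := by rw [hmR]; nlinarith
  have hjexp : (j:ℝ) ≤ Real.exp (j:ℝ) := by linarith [Real.add_one_le_exp (j:ℝ)]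
  have hn1exp : (n:ℝ)+1 ≤ Real.exp (n:ℝ) := by linarith [Real.add_one_le_exp (n:ℝ)]
  have hΛ2m : |Real.log κ| ^ (2*m) = Real.exp (2*(m:ℝ)*A) := by
    rw [← Real.exp_log hΛpos, ← Real.exp_nat_mul]
    congr 1
    push_cast; ring
  have hΛ2n : |Real.log κ| ^ (2*n) = Real.exp (2*(n:ℝ)*A) := by
    rw [← Real.exp_log hΛpos, ← Real.exp_nat_mul]
    congr 1
    push_cast; ring
  have f3 : (j:ℝ)^j = (j:ℝ)^(j-1) * (j:ℝ) := by
    rw [← pow_succ]; congr 1; omega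
  have hKn : Real.exp (4*K*(n:ℝ)) ≤ ((n:ℝ)+1)^n * Real.exp ((j:ℝ)*(n:ℝ)) := by
    calc Real.exp (4*K*(n:ℝ)) = (Real.exp (4*K))^n := by
          rw [← Real.exp_nat_mul]; congr 1; ring
      _ ≤ ((m:ℝ))^n := pow_le_pow_left₀ (Real.exp_pos _).le hexpK n
      _ ≤ (((n:ℝ)+1)*(j:ℝ))^n := pow_le_pow_left₀ (Nat.cast_nonneg m) hmnj n
      _ = ((n:ℝ)+1)^n * (j:ℝ)^n := mul_pow _ _ n
      _ ≤ ((n:ℝ)+1)^n * (Real.exp (j:ℝ))^n :=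
          mul_le_mul_of_nonneg_left (pow_le_pow_left₀ hjRnn hjexp n) (by positivity)
      _ = ((n:ℝ)+1)^n * Real.exp ((j:ℝ)*(n:ℝ)) := by
          rw [← Real.exp_nat_mul]; congr 2; ring
  have hfinal : Real.exp ((j:ℝ)*(-4*(K+A+(n:ℝ)+4)) + (j:ℝ)*(n:ℝ) + (j:ℝ) + 2*(m:ℝ)*A)
      ≤ ((n:ℝ)+1)^n * Real.exp (2*(n:ℝ)*A - 4*K*(m:ℝ) - (j:ℝ)) := by
    calc Real.exp ((j:ℝ)*(-4*(K+A+(n:ℝ)+4)) + (j:ℝ)*(n:ℝ) + (j:ℝ) + 2*(m:ℝ)*A)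
        = Real.exp (4*K*(n:ℝ)) *
            Real.exp (((j:ℝ)*(-4*(K+A+(n:ℝ)+4)) + (j:ℝ)*(n:ℝ) + (j:ℝ) + 2*(m:ℝ)*A) - 4*K*(n:ℝ)) := by
          rw [← Real.exp_add]; congr 1; ring
      _ ≤ (((n:ℝ)+1)^n * Real.exp ((j:ℝ)*(n:ℝ))) *
            Real.exp (((j:ℝ)*(-4*(K+A+(n:ℝ)+4)) + (j:ℝ)*(n:ℝ) + (j:ℝ) + 2*(m:ℝ)*A) - 4*K*(n:ℝ)) :=
          mul_le_mul_of_nonneg_right hKn (Real.exp_pos _).le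
      _ = ((n:ℝ)+1)^n * Real.exp ((j:ℝ)*(n:ℝ) +
            (((j:ℝ)*(-4*(K+A+(n:ℝ)+4)) + (j:ℝ)*(n:ℝ) + (j:ℝ) + 2*(m:ℝ)*A) - 4*K*(n:ℝ))) := by
          rw [mul_assoc, ← Real.exp_add]
      _ ≤ ((n:ℝ)+1)^n * Real.exp (2*(n:ℝ)*A - 4*K*(m:ℝ) - (j:ℝ)) := by
          apply mul_le_mul_of_nonneg_left _ (by positivity)
          apply Real.exp_le_exp.mpr
          rw [hmR]
          nlinarith [mul_nonneg hA.le hjRnn, mul_nonneg (by linarith : (0:ℝ) ≤ (n:ℝ)) hjRnn]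
  have key1 : (q:ℝ)^j * |Real.log κ|^(2*m)
      ≤ ((n:ℝ)+1)^n * |Real.log κ|^(2*n) * ((j:ℝ)^(j-1) * Real.exp (-4*K*(m:ℝ) - (j:ℝ))) := by
    calc (q:ℝ)^j * |Real.log κ|^(2*m)
        = (q:ℝ)^j * Real.exp (2*(m:ℝ)*A) := by rw [hΛ2m]
      _ ≤ (Real.exp (-4*(K+A+(n:ℝ)+4)) * (m:ℝ))^j * Real.exp (2*(m:ℝ)*A) :=
          mul_le_mul_of_nonneg_right (pow_le_pow_left₀ (Nat.cast_nonneg q) hqb j)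
            (Real.exp_pos _).le
      _ = Real.exp (-4*(K+A+(n:ℝ)+4))^j * (m:ℝ)^j * Real.exp (2*(m:ℝ)*A) := by rw [mul_pow]
      _ ≤ Real.exp (-4*(K+A+(n:ℝ)+4))^j * (((n:ℝ)+1)*(j:ℝ))^j * Real.exp (2*(m:ℝ)*A) :=
          mul_le_mul_of_nonneg_right
            (mul_le_mul_of_nonneg_left (pow_le_pow_left₀ (Nat.cast_nonneg m) hmnj j)
              (by positivity)) (Real.exp_pos _).le
      _ = Real.exp ((j:ℝ)*(-4*(K+A+(n:ℝ)+4))) * (((n:ℝ)+1)^j * ((j:ℝ)^(j-1)*(j:ℝ))) *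
            Real.exp (2*(m:ℝ)*A) := by
          rw [← Real.exp_nat_mul, mul_pow, f3]
      _ ≤ Real.exp ((j:ℝ)*(-4*(K+A+(n:ℝ)+4))) * ((Real.exp (n:ℝ))^j * ((j:ℝ)^(j-1)*Real.exp (j:ℝ))) *
            Real.exp (2*(m:ℝ)*A) := by
          apply mul_le_mul_of_nonneg_right _ (Real.exp_pos _).le
          apply mul_le_mul_of_nonneg_left _ (Real.exp_pos _).le
          exact mul_le_mul (pow_le_pow_left₀ (by positivity) hn1exp j)
            (mul_le_mul_of_nonneg_left hjexp (pow_nonneg hjRnn _))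
            (by positivity) (by positivity)
      _ = Real.exp ((j:ℝ)*(-4*(K+A+(n:ℝ)+4)) + (j:ℝ)*(n:ℝ) + (j:ℝ) + 2*(m:ℝ)*A) * (j:ℝ)^(j-1) := by
          rw [← Real.exp_nat_mul,
            show Real.exp ((j:ℝ)*(-4*(K+A+(n:ℝ)+4)) + (j:ℝ)*(n:ℝ) + (j:ℝ) + 2*(m:ℝ)*A)
              = Real.exp ((j:ℝ)*(-4*(K+A+(n:ℝ)+4))) * Real.exp ((j:ℝ)*(n:ℝ)) * Real.exp (j:ℝ) *
                Real.exp (2*(m:ℝ)*A) from by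
              rw [Real.exp_add, Real.exp_add, Real.exp_add]]
          ring
      _ ≤ (((n:ℝ)+1)^n * Real.exp (2*(n:ℝ)*A - 4*K*(m:ℝ) - (j:ℝ))) * (j:ℝ)^(j-1) :=
          mul_le_mul_of_nonneg_right hfinal (pow_nonneg hjRnn _)
      _ = ((n:ℝ)+1)^n * |Real.log κ|^(2*n) * ((j:ℝ)^(j-1) * Real.exp (-4*K*(m:ℝ) - (j:ℝ))) := by
          rw [hΛ2n,
            show Real.exp (2*(n:ℝ)*A - 4*K*(m:ℝ) - (j:ℝ))
              = Real.exp (2*(n:ℝ)*A) * Real.exp (-4*K*(m:ℝ) - (j:ℝ)) from by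
              rw [← Real.exp_add]; congr 1; ring]
          ring
  have hfl := fact_lb j hj1
  have hfacnn : (0:ℝ) ≤ (Nat.factorial (j-1) : ℝ) := by positivity
  have hstep : (j:ℝ)^(j-1) * Real.exp (-(j:ℝ)) ≤ 2*Real.pi*(Nat.factorial (j-1) : ℝ) := by
    nlinarith [Real.pi_gt_three, hfl, hfacnn]
  have core : (n:ℝ) * (q:ℝ)^j * |Real.log κ|^(2*m)
      ≤ (n:ℝ) * ((n:ℝ)+1)^n * |Real.log κ|^(2*n) * Real.exp (-4*K*(m:ℝ)) *
        (2*Real.pi*(Nat.factorial (j-1) : ℝ)) := by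
    calc (n:ℝ) * (q:ℝ)^j * |Real.log κ|^(2*m)
        = (n:ℝ) * ((q:ℝ)^j * |Real.log κ|^(2*m)) := by ring
      _ ≤ (n:ℝ) * (((n:ℝ)+1)^n * |Real.log κ|^(2*n) * ((j:ℝ)^(j-1) * Real.exp (-4*K*(m:ℝ) - (j:ℝ)))) :=
          mul_le_mul_of_nonneg_left key1 (by positivity)
      _ = (n:ℝ) * ((n:ℝ)+1)^n * |Real.log κ|^(2*n) * Real.exp (-4*K*(m:ℝ)) *
            ((j:ℝ)^(j-1) * Real.exp (-(j:ℝ))) := by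
          rw [sub_eq_add_neg (-4*K*(m:ℝ)) (j:ℝ), Real.exp_add]
          ring
      _ ≤ (n:ℝ) * ((n:ℝ)+1)^n * |Real.log κ|^(2*n) * Real.exp (-4*K*(m:ℝ)) *
            (2*Real.pi*(Nat.factorial (j-1) : ℝ)) := by
          apply mul_le_mul_of_nonneg_left hstep
          positivity
  -- assemble
  have hfacpos : (0:ℝ) < 2*Real.pi*(Nat.factorial (j-1) : ℝ) := by positivity
  have hdiv : (n:ℝ) * (q:ℝ)^j * |Real.log κ|^(2*m) / (2*Real.pi*(Nat.factorial (j-1) : ℝ))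
      ≤ (n:ℝ) * ((n:ℝ)+1)^n * |Real.log κ|^(2*n) * Real.exp (-4*K*(m:ℝ)) := by
    rw [div_le_iff₀ hfacpos]
    exact core
  have hlog := log_pow_bound (|Real.log κ|) (|Real.log t|) hΛ.le hL0 hLΛ m
  have htq : t^q ≤ 1 := pow_le_one₀ ht0.le ht2.le
  calc (n:ℝ) * (q:ℝ)^j / (2*Real.pi*(Nat.factorial (j-1) : ℝ)) * t^q * |Real.log t|^m
      ≤ (n:ℝ) * (q:ℝ)^j / (2*Real.pi*(Nat.factorial (j-1) : ℝ)) * 1 *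
          (|Real.log κ|^(2*m) * Real.exp (-(m:ℝ) * |Real.log (|Real.log t|)|)) := by
        apply mul_le_mul _ hlog (pow_nonneg (abs_nonneg _) m) (by positivity)
        apply mul_le_mul_of_nonneg_left htq (by positivity)
    _ = (n:ℝ) * (q:ℝ)^j * |Real.log κ|^(2*m) / (2*Real.pi*(Nat.factorial (j-1) : ℝ)) *
          Real.exp (-(m:ℝ) * |Real.log (|Real.log t|)|) := by ring
    _ ≤ ((n:ℝ) * ((n:ℝ)+1)^n * |Real.log κ|^(2*n) * Real.exp (-4*K*(m:ℝ))) *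
          Real.exp (-(m:ℝ) * |Real.log (|Real.log t|)|) :=
        mul_le_mul_of_nonneg_right hdiv (Real.exp_pos _).le
    _ = (n:ℝ) * ((n:ℝ)+1)^n * |Real.log κ|^(2*n) *
          Real.exp (-4*K*(m:ℝ) - (m:ℝ) * |Real.log (|Real.log t|)|) := by
        rw [mul_assoc, ← Real.exp_add]
        congr 2
        ring
end
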